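/- Let T be a compact metric space, X a Hilbert space, (R_i)_{i≥1} ⊂ L(X) and Borel maps ω_i : T → T with Σ_{i=1}^∞ ‖R_i‖ < ∞. Then for every ν ∈ cabv(T,X), the series Σ_{i=1}^∞ R_i* ∘ ω_i(ν) converges absolutely in cabv(T,X) with the variation norm, and its sum μ satisfies ∫ f dμ = Σ_{i=1}^∞ ∫ (R_i ∘ f ∘ ω_i) dν for every continuous f : T → X. -/

import Mathlib

/-!
Each term `R_i* ∘ ω_i(ν)` has total variation at most `‖R_i‖ |ν|(T)`, so the series is absolutely
summable in variation; its setwise sum is again countably additive because absolutely summable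
double series can be summed in either order, and the tails of the series tend to `0` in variation.
For continuous `f`, uniformly approximated by simple functions on the compact space `T`, the
integral `∫ f dμ` is additive in `μ` and bounded by `‖f‖_∞ |μ|(T)`, hence passes to the limit of
the partial sums; on simple functions the adjoint identity `⟪R* y, x⟫ = ⟪y, R x⟫` turns
`∫ f d(R_i* ∘ ω_i(ν))` into `∫ R_i ∘ f ∘ ω_i dν`.
-/

open MeasureTheory Filter Classical
open scoped ENNReal NNReal

/-- The total variation `|μ|(T)` of a vector measure. -/
noncomputable def totalVar {T X : Type*} [MeasurableSpace T] [NormedAddCommGroup X]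
    (μ : VectorMeasure T X) : ℝ≥0∞ :=
  ⨆ P ∈ {P : Finset (Set T) |
      (∀ A ∈ P, MeasurableSet A) ∧ (P : Set (Set T)).PairwiseDisjoint id},
    ∑ A ∈ P, (‖μ A‖₊ : ℝ≥0∞)

/-- The integral of a simple function against a vector measure:
`∫ (Σ φ_{A_i} x_i) dμ = Σ (x_i, μ(A_i))` (linear in the `x_i`, antilinear in `μ`). -/
noncomputable def simpleInt (𝕜 : Type*) {T X : Type*} [RCLike 𝕜] [MeasurableSpace T]
    [NormedAddCommGroup X] [InnerProductSpace 𝕜 X]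
    (μ : VectorMeasure T X) (g : SimpleFunc T X) : 𝕜 :=
  ∑ x ∈ g.range, (inner 𝕜 (μ (g ⁻¹' {x})) x : 𝕜)

/-- The sesquilinear uniform integral `∫ f dμ` of a totally measurable function `f`
(a uniform limit of simple functions) against a vector measure `μ`, extending the
simple-function integral by uniform limits (junk value `0` otherwise). -/
noncomputable def sesqInt (𝕜 : Type*) {T X : Type*} [RCLike 𝕜] [MeasurableSpace T]
    [NormedAddCommGroup X] [InnerProductSpace 𝕜 X]
    (μ : VectorMeasure T X) (f : T → X) : 𝕜 :=
  if h : ∃ g : ℕ → SimpleFunc T X, TendstoUniformly (fun n => ⇑(g n)) f atTop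
  then limUnder atTop (fun n => simpleInt 𝕜 μ (h.choose n))
  else 0

/-- `R* ∘ (ω(ν))`: the pushforward of `ν` under `ω` composed with the Hilbert
adjoint `R*`. -/
noncomputable def pushTerm {𝕜 T X : Type*} [RCLike 𝕜] [MeasurableSpace T]
    [NormedAddCommGroup X] [InnerProductSpace 𝕜 X] [CompleteSpace X]
    (R : X →L[𝕜] X) (ω : T → T) (ν : VectorMeasure T X) : VectorMeasure T X :=
  (ν.map ω).mapRange (ContinuousLinearMap.adjoint R).toLinearMap.toAddMonoidHom
    (ContinuousLinearMap.adjoint R).continuous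

section TotalVariation

variable {T X : Type*} [MeasurableSpace T] [NormedAddCommGroup X]

theorem sum_nnnorm_le_totalVar (μ : VectorMeasure T X) {ι : Type*} {s : Finset ι}
    {A : ι → Set T} (hA : ∀ i ∈ s, MeasurableSet (A i)) (hd : (s : Set ι).PairwiseDisjoint A) :
    ∑ i ∈ s, (‖μ (A i)‖₊ : ℝ≥0∞) ≤ totalVar μ := by
  set s' := s.filter fun i => (A i).Nonempty
  have hs' : s' ⊆ s := Finset.filter_subset _ _
  have hinj : Set.InjOn A s' := fun i hi j hj hij => by
    by_contra hne
    have hdisj : Disjoint (A i) (A j) := hd (hs' hi) (hs' hj) hne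
    rw [hij, disjoint_self, Set.bot_eq_empty] at hdisj
    exact (Finset.mem_filter.1 hj).2.ne_empty hdisj
  have hadm : s'.image A ∈ {P : Finset (Set T) |
      (∀ B ∈ P, MeasurableSet B) ∧ (P : Set (Set T)).PairwiseDisjoint id} := by
    refine ⟨fun B hB => ?_, ?_⟩
    · obtain ⟨i, hi, rfl⟩ := Finset.mem_image.1 hB
      exact hA i (hs' hi)
    · rw [Finset.coe_image, hinj.pairwiseDisjoint_image]
      exact hd.subset hs'
  calc ∑ i ∈ s, (‖μ (A i)‖₊ : ℝ≥0∞)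
      = ∑ i ∈ s', (‖μ (A i)‖₊ : ℝ≥0∞) :=
        (Finset.sum_filter_of_ne fun i _ h =>
          Set.nonempty_iff_ne_empty.2 fun he => h (by simp [he])).symm
    _ = ∑ B ∈ s'.image A, (‖μ B‖₊ : ℝ≥0∞) :=
        (Finset.sum_image (f := fun B => (‖μ B‖₊ : ℝ≥0∞)) hinj).symm
    _ ≤ totalVar μ := le_iSup₂_of_le _ hadm le_rfl

theorem nnnorm_le_totalVar (μ : VectorMeasure T X) {A : Set T} (hA : MeasurableSet A) :
    (‖μ A‖₊ : ℝ≥0∞) ≤ totalVar μ := by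
  simpa using sum_nnnorm_le_totalVar μ (s := {()}) (A := fun _ => A) (by simpa using hA)
    (by simp)

theorem tsum_nnnorm_le_totalVar (μ : VectorMeasure T X) {A : ℕ → Set T}
    (hA : ∀ i, MeasurableSet (A i)) (hd : Pairwise (Function.onFun Disjoint A)) :
    ∑' i, (‖μ (A i)‖₊ : ℝ≥0∞) ≤ totalVar μ := by
  rw [ENNReal.tsum_eq_iSup_sum]
  exact iSup_le fun s => sum_nnnorm_le_totalVar μ (fun i _ => hA i) (hd.set_pairwise _)

theorem summable_nnnorm_apply_of_tsum_totalVar_ne_top {μ : ℕ → VectorMeasure T X}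
    (h : ∑' i, totalVar (μ i) ≠ ⊤) {A : Set T} (hA : MeasurableSet A) :
    Summable fun i => ‖μ i A‖₊ :=
  ENNReal.tsum_coe_ne_top_iff_summable.1 <|
    ne_top_of_le_ne_top h (ENNReal.tsum_le_tsum fun i => nnnorm_le_totalVar (μ i) hA)

theorem totalVar_zero : totalVar (0 : VectorMeasure T X) = 0 :=
  nonpos_iff_eq_zero.1 <| iSup₂_le fun P _ => by simp

theorem totalVar_neg (μ : VectorMeasure T X) : totalVar (-μ) = totalVar μ := by
  simp [totalVar]

theorem totalVar_add_le (μ₁ μ₂ : VectorMeasure T X) :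
    totalVar (μ₁ + μ₂) ≤ totalVar μ₁ + totalVar μ₂ := by
  refine iSup₂_le fun P hP => ?_
  calc ∑ A ∈ P, (‖(μ₁ + μ₂) A‖₊ : ℝ≥0∞)
      ≤ ∑ A ∈ P, ((‖μ₁ A‖₊ : ℝ≥0∞) + ‖μ₂ A‖₊) := by
        gcongr with A
        exact_mod_cast nnnorm_add_le _ _
    _ = ∑ A ∈ P, (‖μ₁ A‖₊ : ℝ≥0∞) + ∑ A ∈ P, (‖μ₂ A‖₊ : ℝ≥0∞) := Finset.sum_add_distrib
    _ ≤ totalVar μ₁ + totalVar μ₂ := by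
        gcongr <;> exact le_iSup₂_of_le P hP le_rfl

theorem totalVar_sub_le (μ₁ μ₂ : VectorMeasure T X) :
    totalVar (μ₁ - μ₂) ≤ totalVar μ₁ + totalVar μ₂ := by
  simpa [sub_eq_add_neg, totalVar_neg] using totalVar_add_le μ₁ (-μ₂)

theorem totalVar_sum_le {ι : Type*} (μ : ι → VectorMeasure T X) (s : Finset ι) :
    totalVar (∑ i ∈ s, μ i) ≤ ∑ i ∈ s, totalVar (μ i) := by
  induction s using Finset.induction_on with
  | empty => simp [totalVar_zero]
  | insert a s ha ih =>
    rw [Finset.sum_insert ha, Finset.sum_insert ha]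
    exact (totalVar_add_le _ _).trans (by gcongr)

end TotalVariation

section SeriesMeasure

variable {T X : Type*} [MeasurableSpace T] [NormedAddCommGroup X] [CompleteSpace X]

noncomputable def seriesMeasure (μ : ℕ → VectorMeasure T X)
    (h : ∑' i, totalVar (μ i) ≠ ⊤) : VectorMeasure T X where
  measureOf' A := ∑' i, μ i A
  empty' := by simp
  not_measurable' A hA := by simp [VectorMeasure.not_measurable _ hA]
  m_iUnion' A hA hd := by
    set F : ℕ → ℕ → X := fun j i => μ i (A j)
    -- the double series is absolutely summable, so its two iterated sums agree
    have hF : Summable (Function.uncurry F) := by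
      refine .of_nnnorm <| ENNReal.tsum_coe_ne_top_iff_summable.1 ?_
      rw [ENNReal.tsum_prod', ENNReal.tsum_comm]
      exact ne_top_of_le_ne_top h
        (ENNReal.tsum_le_tsum fun i => tsum_nnnorm_le_totalVar (μ i) hA hd)
    have hunion : ∀ i, HasSum (fun j => F j i) (μ i (⋃ j, A j)) := fun i =>
      (μ i).hasSum_of_disjoint_iUnion hA hd
    have hsum : ∑' p, Function.uncurry F p = ∑' i, μ i (⋃ j, A j) := by
      rw [hF.tsum_prod_uncurry hF.prod_factor, ← hF.tsum_comm' hF.prod_factor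
        fun i => (hunion i).summable]
      exact tsum_congr fun i => (hunion i).tsum_eq
    exact hsum ▸ hF.hasSum.prod_fiberwise fun j => (hF.prod_factor j).hasSum

theorem seriesMeasure_apply (μ : ℕ → VectorMeasure T X) (h : ∑' i, totalVar (μ i) ≠ ⊤)
    (A : Set T) : seriesMeasure μ h A = ∑' i, μ i A := rfl

theorem totalVar_seriesMeasure_le (μ : ℕ → VectorMeasure T X)
    (h : ∑' i, totalVar (μ i) ≠ ⊤) :
    totalVar (seriesMeasure μ h) ≤ ∑' i, totalVar (μ i) := by
  refine iSup₂_le fun P hP => ?_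
  calc ∑ A ∈ P, (‖seriesMeasure μ h A‖₊ : ℝ≥0∞)
      ≤ ∑ A ∈ P, ∑' i, (‖μ i A‖₊ : ℝ≥0∞) := by
        gcongr with A hA
        have hsummable : Summable fun i => ‖μ i A‖₊ :=
          summable_nnnorm_apply_of_tsum_totalVar_ne_top h (hP.1 A hA)
        rw [seriesMeasure_apply, ← ENNReal.coe_tsum hsummable]
        exact ENNReal.coe_le_coe.2 (nnnorm_tsum_le hsummable)
    _ = ∑' i, ∑ A ∈ P, (‖μ i A‖₊ : ℝ≥0∞) :=
        (Summable.tsum_finsetSum fun _ _ => ENNReal.summable).symm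
    _ ≤ ∑' i, totalVar (μ i) :=
        ENNReal.tsum_le_tsum fun i => sum_nnnorm_le_totalVar (μ i) (A := id) hP.1 hP.2

theorem seriesMeasure_sub_sum_range (μ : ℕ → VectorMeasure T X)
    (h : ∑' i, totalVar (μ i) ≠ ⊤) (n : ℕ) :
    seriesMeasure μ h - ∑ i ∈ Finset.range n, μ i =
      seriesMeasure (fun i => μ (i + n))
        (ne_top_of_le_ne_top h (ENNReal.tsum_comp_le_tsum_of_injective
          (add_left_injective n) _)) := by
  ext A hA
  have hA' := (summable_nnnorm_apply_of_tsum_totalVar_ne_top h hA).of_nnnorm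
  rw [sub_apply, FunLike.coe_sum, Finset.sum_apply, seriesMeasure_apply, seriesMeasure_apply,
    ← hA'.sum_add_tsum_nat_add n, add_sub_cancel_left]

theorem tendsto_totalVar_seriesMeasure_sub_sum_range (μ : ℕ → VectorMeasure T X)
    (h : ∑' i, totalVar (μ i) ≠ ⊤) :
    Tendsto (fun n => totalVar (seriesMeasure μ h - ∑ i ∈ Finset.range n, μ i))
      atTop (nhds 0) := by
  refine tendsto_of_tendsto_of_tendsto_of_le_of_le tendsto_const_nhds
    (ENNReal.tendsto_sum_nat_add _ h) (fun n => zero_le) fun n => ?_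
  rw [seriesMeasure_sub_sum_range]
  exact totalVar_seriesMeasure_le _ _

end SeriesMeasure

section SimpleIntegral

variable {𝕜 T X : Type*} [RCLike 𝕜] [MeasurableSpace T]
  [NormedAddCommGroup X] [InnerProductSpace 𝕜 X]

theorem simpleInt_map (μ : VectorMeasure T X) {Y : Type*} (p : SimpleFunc T Y) (φ : Y → X) :
    simpleInt 𝕜 μ (p.map φ) = ∑ y ∈ p.range, (inner 𝕜 (μ (p ⁻¹' {y})) (φ y) : 𝕜) := by
  have hfiber : ∀ x, μ (p.map φ ⁻¹' {x}) = ∑ y ∈ p.range with φ y = x, μ (p ⁻¹' {y}) := by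
    intro x
    rw [SimpleFunc.map_preimage_singleton, ← Finset.set_biUnion_preimage_singleton,
      VectorMeasure.of_biUnion_finset (fun y _ y' _ hyy' =>
        Disjoint.preimage _ (Set.disjoint_singleton.2 hyy')) fun y _ => p.measurableSet_fiber y]
  calc simpleInt 𝕜 μ (p.map φ)
      = ∑ x ∈ (p.map φ).range, ∑ y ∈ p.range with φ y = x,
          (inner 𝕜 (μ (p ⁻¹' {y})) (φ y) : 𝕜) := by
        refine Finset.sum_congr rfl fun x _ => ?_
        rw [hfiber, sum_inner]
        exact Finset.sum_congr rfl fun y hy => by rw [(Finset.mem_filter.1 hy).2]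
    _ = ∑ y ∈ p.range, (inner 𝕜 (μ (p ⁻¹' {y})) (φ y) : 𝕜) := by
        refine Finset.sum_fiberwise_of_maps_to (fun y hy => ?_) _
        rw [SimpleFunc.range_map]
        exact Finset.mem_image_of_mem φ hy

theorem simpleInt_sub (μ : VectorMeasure T X) (g g' : SimpleFunc T X) :
    simpleInt 𝕜 μ g - simpleInt 𝕜 μ g' = simpleInt 𝕜 μ (g - g') := by
  change simpleInt 𝕜 μ ((g.pair g').map Prod.fst) - simpleInt 𝕜 μ ((g.pair g').map Prod.snd) =
    simpleInt 𝕜 μ ((g.pair g').map fun y => y.1 - y.2)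
  simp only [simpleInt_map, ← Finset.sum_sub_distrib, inner_sub_right]

theorem norm_simpleInt_le (μ : VectorMeasure T X) (hμ : totalVar μ ≠ ⊤)
    (g : SimpleFunc T X) {c : ℝ} (hc0 : 0 ≤ c) (hc : ∀ t, ‖g t‖ ≤ c) :
    ‖simpleInt 𝕜 μ g‖ ≤ c * (totalVar μ).toReal := by
  have hfibers : ∑ x ∈ g.range, ‖μ (g ⁻¹' {x})‖ ≤ (totalVar μ).toReal := by
    have := ENNReal.toReal_mono hμ <| sum_nnnorm_le_totalVar μ (s := g.range)
      (fun x _ => g.measurableSet_fiber x) fun x _ x' _ hxx' =>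
        Disjoint.preimage _ (Set.disjoint_singleton.2 hxx')
    simpa [ENNReal.toReal_sum] using this
  calc ‖simpleInt 𝕜 μ g‖ ≤ ∑ x ∈ g.range, ‖μ (g ⁻¹' {x})‖ * c := by
        refine norm_sum_le_of_le _ fun x hx => (norm_inner_le_norm _ _).trans ?_
        obtain ⟨t, rfl⟩ := SimpleFunc.mem_range.1 hx
        exact mul_le_mul_of_nonneg_left (hc t) (norm_nonneg _)
    _ ≤ c * (totalVar μ).toReal := by
        rw [← Finset.sum_mul, mul_comm]
        exact mul_le_mul_of_nonneg_left hfibers hc0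

theorem simpleInt_add_measure (μ₁ μ₂ : VectorMeasure T X) (g : SimpleFunc T X) :
    simpleInt 𝕜 (μ₁ + μ₂) g = simpleInt 𝕜 μ₁ g + simpleInt 𝕜 μ₂ g := by
  simp only [simpleInt, add_apply, inner_add_left, Finset.sum_add_distrib]

theorem simpleInt_zero_measure (g : SimpleFunc T X) :
    simpleInt 𝕜 (0 : VectorMeasure T X) g = 0 := by
  simp [simpleInt]

end SimpleIntegral

section UniformIntegral

variable {𝕜 T X : Type*} [RCLike 𝕜] [MeasurableSpace T]
  [NormedAddCommGroup X] [InnerProductSpace 𝕜 X]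

theorem tendsto_simpleInt_sub_of_tendstoUniformly (μ : VectorMeasure T X)
    (hμ : totalVar μ ≠ ⊤) {ι : Type*} {l : Filter ι} {f : T → X} {g g' : ι → SimpleFunc T X}
    (hg : TendstoUniformly (fun n => ⇑(g n)) f l)
    (hg' : TendstoUniformly (fun n => ⇑(g' n)) f l) :
    Tendsto (fun n => simpleInt 𝕜 μ (g n) - simpleInt 𝕜 μ (g' n)) l (nhds 0) := by
  rw [Metric.tendsto_nhds]
  intro ε hε
  set V := (totalVar μ).toReal
  have hδ : 0 < ε / (2 * (V + 1)) := by positivity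
  filter_upwards [Metric.tendstoUniformly_iff.1 hg _ hδ,
    Metric.tendstoUniformly_iff.1 hg' _ hδ] with n hn hn'
  rw [dist_zero_right, simpleInt_sub]
  calc ‖simpleInt 𝕜 μ (g n - g' n)‖ ≤ 2 * (ε / (2 * (V + 1))) * V := by
        refine norm_simpleInt_le μ hμ _ (by positivity) fun t => ?_
        rw [SimpleFunc.coe_sub, Pi.sub_apply, ← dist_eq_norm]
        linarith [dist_triangle_left (g n t) (g' n t) (f t), hn t, hn' t]
    _ = ε * (V / (V + 1)) := by field_simp
    _ < ε := mul_lt_of_lt_one_right hε ((div_lt_one (by positivity)).2 (lt_add_one V))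

theorem cauchySeq_simpleInt (μ : VectorMeasure T X) (hμ : totalVar μ ≠ ⊤)
    {f : T → X} {g : ℕ → SimpleFunc T X} (hg : TendstoUniformly (fun n => ⇑(g n)) f atTop) :
    CauchySeq fun n => simpleInt 𝕜 μ (g n) := by
  have hfst : Tendsto Prod.fst (atTop : Filter (ℕ × ℕ)) atTop :=
    tendsto_atTop_atTop.2 fun n => ⟨(n, 0), fun p hp => hp.1⟩
  have hsnd : Tendsto Prod.snd (atTop : Filter (ℕ × ℕ)) atTop :=
    tendsto_atTop_atTop.2 fun n => ⟨(0, n), fun p hp => hp.2⟩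
  rw [cauchySeq_iff_tendsto_dist_atTop_0]
  have h := tendsto_simpleInt_sub_of_tendstoUniformly (𝕜 := 𝕜) μ hμ
    (g := fun p : ℕ × ℕ => g p.1) (g' := fun p : ℕ × ℕ => g p.2)
    (fun u hu => hfst.eventually (hg u hu)) (fun u hu => hsnd.eventually (hg u hu))
  simpa only [dist_eq_norm, norm_zero] using h.norm

theorem sesqInt_eq_of_tendsto (μ : VectorMeasure T X) (hμ : totalVar μ ≠ ⊤)
    {f : T → X} {g : ℕ → SimpleFunc T X} (hg : TendstoUniformly (fun n => ⇑(g n)) f atTop)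
    {L : 𝕜} (hL : Tendsto (fun n => simpleInt 𝕜 μ (g n)) atTop (nhds L)) :
    sesqInt 𝕜 μ f = L := by
  have hex : ∃ g : ℕ → SimpleFunc T X, TendstoUniformly (fun n => ⇑(g n)) f atTop := ⟨g, hg⟩
  rw [sesqInt, dif_pos hex]
  refine Tendsto.limUnder_eq ?_
  simpa using (tendsto_simpleInt_sub_of_tendstoUniformly μ hμ hex.choose_spec hg).add hL

theorem tendsto_simpleInt_sesqInt (μ : VectorMeasure T X) (hμ : totalVar μ ≠ ⊤)
    {f : T → X} {g : ℕ → SimpleFunc T X} (hg : TendstoUniformly (fun n => ⇑(g n)) f atTop) :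
    Tendsto (fun n => simpleInt 𝕜 μ (g n)) atTop (nhds (sesqInt 𝕜 μ f)) := by
  obtain ⟨L, hL⟩ := cauchySeq_tendsto_of_complete (cauchySeq_simpleInt (𝕜 := 𝕜) μ hμ hg)
  rwa [sesqInt_eq_of_tendsto μ hμ hg hL]

theorem norm_sesqInt_le (μ : VectorMeasure T X) (hμ : totalVar μ ≠ ⊤)
    {f : T → X} {g : ℕ → SimpleFunc T X} (hg : TendstoUniformly (fun n => ⇑(g n)) f atTop)
    {c : ℝ} (hc0 : 0 ≤ c) (hc : ∀ t, ‖f t‖ ≤ c) :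
    ‖sesqInt 𝕜 μ f‖ ≤ c * (totalVar μ).toReal := by
  have hle : ∀ ε > 0, ‖sesqInt 𝕜 μ f‖ ≤ (c + ε) * (totalVar μ).toReal := fun ε hε => by
    refine le_of_tendsto (tendsto_simpleInt_sesqInt μ hμ hg).norm ?_
    filter_upwards [Metric.tendstoUniformly_iff.1 hg ε hε] with n hn
    refine norm_simpleInt_le μ hμ _ (by positivity) fun t => ?_
    linarith [norm_le_norm_add_norm_sub' (g n t) (f t), hc t, dist_eq_norm' (f t) (g n t) ▸ hn t]
  have hlim : Tendsto (fun ε => (c + ε) * (totalVar μ).toReal) (nhdsWithin 0 (Set.Ioi 0))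
      (nhds (c * (totalVar μ).toReal)) := by
    have hcont : Continuous fun ε : ℝ => (c + ε) * (totalVar μ).toReal := by fun_prop
    simpa using (hcont.tendsto 0).mono_left nhdsWithin_le_nhds
  exact ge_of_tendsto hlim (eventually_nhdsWithin_of_forall hle)

theorem sesqInt_add_measure (μ₁ μ₂ : VectorMeasure T X)
    (hμ₁ : totalVar μ₁ ≠ ⊤) (hμ₂ : totalVar μ₂ ≠ ⊤)
    {f : T → X} {g : ℕ → SimpleFunc T X} (hg : TendstoUniformly (fun n => ⇑(g n)) f atTop) :
    sesqInt 𝕜 (μ₁ + μ₂) f = sesqInt 𝕜 μ₁ f + sesqInt 𝕜 μ₂ f := by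
  refine sesqInt_eq_of_tendsto _ (ne_top_of_le_ne_top (ENNReal.add_ne_top.2 ⟨hμ₁, hμ₂⟩)
    (totalVar_add_le μ₁ μ₂)) hg ?_
  simpa only [simpleInt_add_measure] using
    (tendsto_simpleInt_sesqInt μ₁ hμ₁ hg).add (tendsto_simpleInt_sesqInt μ₂ hμ₂ hg)

theorem sesqInt_sum_measure {ι : Type*} (μ : ι → VectorMeasure T X) (s : Finset ι)
    (hμ : ∀ i ∈ s, totalVar (μ i) ≠ ⊤)
    {f : T → X} {g : ℕ → SimpleFunc T X} (hg : TendstoUniformly (fun n => ⇑(g n)) f atTop) :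
    sesqInt 𝕜 (∑ i ∈ s, μ i) f = ∑ i ∈ s, sesqInt 𝕜 (μ i) f := by
  induction s using Finset.induction_on with
  | empty =>
    exact sesqInt_eq_of_tendsto _ (by simp [totalVar_zero]) hg
      (by simp [simpleInt_zero_measure])
  | insert a s ha ih =>
    have hs : ∀ i ∈ s, totalVar (μ i) ≠ ⊤ := fun i hi => hμ i (Finset.mem_insert_of_mem hi)
    have hsum : totalVar (∑ i ∈ s, μ i) ≠ ⊤ := ne_top_of_le_ne_top
      (ENNReal.sum_ne_top.2 hs) (totalVar_sum_le μ s)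
    rw [Finset.sum_insert ha, Finset.sum_insert ha,
      sesqInt_add_measure _ _ (hμ a (Finset.mem_insert_self a s)) hsum hg, ih hs]

theorem norm_sesqInt_sub_sesqInt_le (μ μ' : VectorMeasure T X)
    (hμ : totalVar μ ≠ ⊤) (hμ' : totalVar μ' ≠ ⊤)
    {f : T → X} {g : ℕ → SimpleFunc T X} (hg : TendstoUniformly (fun n => ⇑(g n)) f atTop)
    {c : ℝ} (hc0 : 0 ≤ c) (hc : ∀ t, ‖f t‖ ≤ c) :
    ‖sesqInt 𝕜 μ f - sesqInt 𝕜 μ' f‖ ≤ c * (totalVar (μ - μ')).toReal := by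
  have hsub : totalVar (μ - μ') ≠ ⊤ :=
    ne_top_of_le_ne_top (ENNReal.add_ne_top.2 ⟨hμ, hμ'⟩) (totalVar_sub_le μ μ')
  conv_lhs => rw [← sub_add_cancel μ μ', sesqInt_add_measure _ _ hsub hμ' hg, add_sub_cancel_right]
  exact norm_sesqInt_le _ hsub hg hc0 hc

end UniformIntegral

theorem hasSum_sesqInt_seriesMeasure {𝕜 T X : Type*} [RCLike 𝕜] [MeasurableSpace T]
    [NormedAddCommGroup X] [InnerProductSpace 𝕜 X] [CompleteSpace X]
    (μ : ℕ → VectorMeasure T X) (h : ∑' i, totalVar (μ i) ≠ ⊤)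
    {f : T → X} {g : ℕ → SimpleFunc T X} (hg : TendstoUniformly (fun n => ⇑(g n)) f atTop)
    {c : ℝ} (hc0 : 0 ≤ c) (hc : ∀ t, ‖f t‖ ≤ c) :
    HasSum (fun i => sesqInt 𝕜 (μ i) f) (sesqInt 𝕜 (seriesMeasure μ h) f) := by
  have hμ : ∀ i, totalVar (μ i) ≠ ⊤ := fun i => ne_top_of_le_ne_top h (ENNReal.le_tsum i)
  have hpartial : ∀ n, totalVar (∑ i ∈ Finset.range n, μ i) ≠ ⊤ := fun n =>
    ne_top_of_le_ne_top (ENNReal.sum_ne_top.2 fun i _ => hμ i) (totalVar_sum_le μ _)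
  have hnorm : Summable fun i => ‖sesqInt 𝕜 (μ i) f‖ :=
    ((ENNReal.summable_toReal h).mul_left c).of_nonneg_of_le (fun _ => norm_nonneg _)
      fun i => norm_sesqInt_le _ (hμ i) hg hc0 hc
  rw [hasSum_iff_tendsto_nat_of_summable_norm hnorm, tendsto_iff_norm_sub_tendsto_zero]
  have htail := ((ENNReal.tendsto_toReal ENNReal.zero_ne_top).comp
    (tendsto_totalVar_seriesMeasure_sub_sum_range μ h)).const_mul c
  rw [ENNReal.toReal_zero, mul_zero] at htail
  refine squeeze_zero (fun n => norm_nonneg _) (fun n => ?_) htail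
  rw [← sesqInt_sum_measure μ _ (fun i _ => hμ i) hg, norm_sub_rev]
  exact norm_sesqInt_sub_sesqInt_le _ _
    (ne_top_of_le_ne_top h (totalVar_seriesMeasure_le μ h)) (hpartial n) hg hc0 hc

section PushTerm

variable {𝕜 T X : Type*} [RCLike 𝕜] [MeasurableSpace T]
  [NormedAddCommGroup X] [InnerProductSpace 𝕜 X] [CompleteSpace X]

theorem pushTerm_apply (R : X →L[𝕜] X) {ω : T → T} (hω : Measurable ω)
    (ν : VectorMeasure T X) {A : Set T} (hA : MeasurableSet A) :
    pushTerm R ω ν A = ContinuousLinearMap.adjoint R (ν (ω ⁻¹' A)) := by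
  change ContinuousLinearMap.adjoint R (ν.map ω A) = _
  rw [VectorMeasure.map_apply _ hω hA]

theorem totalVar_pushTerm_le (R : X →L[𝕜] X) {ω : T → T} (hω : Measurable ω)
    (ν : VectorMeasure T X) :
    totalVar (pushTerm R ω ν) ≤ ‖R‖₊ * totalVar ν := by
  refine iSup₂_le fun P hP => ?_
  calc ∑ A ∈ P, (‖pushTerm R ω ν A‖₊ : ℝ≥0∞)
      ≤ ∑ A ∈ P, (‖R‖₊ : ℝ≥0∞) * ‖ν (ω ⁻¹' A)‖₊ := by
        gcongr with A hA
        rw [pushTerm_apply R hω ν (hP.1 A hA), ← ENNReal.coe_mul, ENNReal.coe_le_coe,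
          ← ContinuousLinearMap.adjoint.nnnorm_map R]
        exact (ContinuousLinearMap.adjoint R).le_opNNNorm _
    _ = ‖R‖₊ * ∑ A ∈ P, (‖ν (ω ⁻¹' A)‖₊ : ℝ≥0∞) := (Finset.mul_sum _ _ _).symm
    _ ≤ ‖R‖₊ * totalVar ν := by
        gcongr
        exact sum_nnnorm_le_totalVar ν (A := (ω ⁻¹' ·)) (fun B hB => hω (hP.1 B hB))
          fun B hB C hC hne => (hP.2 hB hC hne).preimage ω

theorem simpleInt_pushTerm (R : X →L[𝕜] X) {ω : T → T} (hω : Measurable ω)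
    (ν : VectorMeasure T X) (g : SimpleFunc T X) :
    simpleInt 𝕜 (pushTerm R ω ν) g = simpleInt 𝕜 ν ((g.comp ω hω).map R) := by
  rw [simpleInt_map, simpleInt]
  have hterm : ∀ x ∈ g.range, (inner 𝕜 (pushTerm R ω ν (g ⁻¹' {x})) x : 𝕜) =
      inner 𝕜 (ν (g.comp ω hω ⁻¹' {x})) (R x) := fun x _ => by
    rw [pushTerm_apply R hω ν (g.measurableSet_fiber x), SimpleFunc.coe_comp, Set.preimage_comp,
      ContinuousLinearMap.adjoint_inner_left]
  rw [Finset.sum_congr rfl hterm]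
  refine (Finset.sum_subset (SimpleFunc.range_comp_subset_range g hω) fun x _ hx => ?_).symm
  rw [Set.preimage_singleton_eq_empty.2 fun hmem => hx (SimpleFunc.mem_range.2 hmem),
    VectorMeasure.empty, inner_zero_left]

theorem sesqInt_pushTerm (R : X →L[𝕜] X) {ω : T → T} (hω : Measurable ω)
    {ν : VectorMeasure T X} (hν : totalVar ν ≠ ⊤)
    {f : T → X} {g : ℕ → SimpleFunc T X} (hg : TendstoUniformly (fun n => ⇑(g n)) f atTop) :
    sesqInt 𝕜 ν (fun t => R (f (ω t))) = sesqInt 𝕜 (pushTerm R ω ν) f := by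
  have hpush : totalVar (pushTerm R ω ν) ≠ ⊤ :=
    ne_top_of_le_ne_top (ENNReal.mul_ne_top ENNReal.coe_ne_top hν) (totalVar_pushTerm_le R hω ν)
  refine sesqInt_eq_of_tendsto (g := fun n => ((g n).comp ω hω).map R) ν hν
    (R.uniformContinuous.comp_tendstoUniformly (hg.comp ω)) ?_
  simpa only [simpleInt_pushTerm R hω] using tendsto_simpleInt_sesqInt (𝕜 := 𝕜) _ hpush hg

end PushTerm

section Approximation

variable {T X : Type*} [MetricSpace T] [CompactSpace T] [MeasurableSpace T]
  [OpensMeasurableSpace T] [NormedAddCommGroup X]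

theorem exists_simpleFunc_dist_lt {f : T → X} (hf : Continuous f) {ε : ℝ} (hε : 0 < ε) :
    ∃ g : SimpleFunc T X, ∀ t, dist (f t) (g t) < ε := by
  rcases isEmpty_or_nonempty T with hT | hT
  · exact ⟨0, fun t => isEmptyElim t⟩
  obtain ⟨δ, hδ, hfδ⟩ :=
    Metric.uniformContinuous_iff.1 (CompactSpace.uniformContinuous_of_continuous hf) ε hε
  set e := TopologicalSpace.denseSeq T
  obtain ⟨s, hs⟩ := isCompact_univ.elim_finite_subcover (fun k => Metric.ball (e k) δ)
    (fun _ => Metric.isOpen_ball) fun t _ => by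
      obtain ⟨k, hk⟩ := (TopologicalSpace.denseRange_denseSeq T).exists_dist_lt t hδ
      exact Set.mem_iUnion.2 ⟨k, Metric.mem_ball.2 hk⟩
  refine ⟨(SimpleFunc.nearestPt e (s.sup id)).map f, fun t => hfδ ?_⟩
  obtain ⟨k, hk, hkt⟩ := Set.mem_iUnion₂.1 (hs (Set.mem_univ t))
  rw [dist_comm, ← edist_lt_ofReal]
  exact (SimpleFunc.edist_nearestPt_le e t (Finset.le_sup (f := id) hk)).trans_lt
    (edist_lt_ofReal.2 (Metric.mem_ball'.1 hkt))

theorem exists_seq_simpleFunc_tendstoUniformly {f : T → X} (hf : Continuous f) :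
    ∃ g : ℕ → SimpleFunc T X, TendstoUniformly (fun n => ⇑(g n)) f atTop := by
  choose g hg using fun n : ℕ => exists_simpleFunc_dist_lt hf (Nat.one_div_pos_of_nat (n := n))
  refine ⟨g, Metric.tendstoUniformly_iff.2 fun ε hε => ?_⟩
  obtain ⟨N, hN⟩ := exists_nat_one_div_lt hε
  filter_upwards [eventually_ge_atTop N] with n hn t
  exact (hg n t).trans_le ((Nat.one_div_le_one_div hn).trans hN.le)

end Approximation

/-- for `(R_i) ⊂ L(X)` with `Σ ‖R_i‖ < ∞` and Borel maps `ω_i : T → T`,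
for every `ν ∈ cabv(T,X)` the series `Σ_i R_i* ∘ ω_i(ν)` converges absolutely in the
variation norm, and its sum `μ` satisfies `∫ f dμ = Σ_i ∫ (R_i ∘ f ∘ ω_i) dν` for
every continuous `f : T → X`. -/
theorem markov_series_converges {𝕜 T X : Type*} [RCLike 𝕜]
    [MetricSpace T] [CompactSpace T] [MeasurableSpace T] [BorelSpace T]
    [NormedAddCommGroup X] [InnerProductSpace 𝕜 X] [CompleteSpace X]
    (R : ℕ → X →L[𝕜] X) (ω : ℕ → T → T) (hω : ∀ i, Measurable (ω i))
    (hsum : Summable fun i => ‖R i‖)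
    (ν : VectorMeasure T X) (hν : totalVar ν ≠ ⊤) :
    ∃ μ : VectorMeasure T X,
      -- absolute convergence of the series in the variation norm
      (Summable fun i => (totalVar (pushTerm (R i) (ω i) ν)).toReal) ∧
      -- convergence of the partial sums to `μ` in the variation norm
      Tendsto (fun n => totalVar (μ - ∑ i ∈ Finset.range n, pushTerm (R i) (ω i) ν))
        atTop (nhds 0) ∧
      -- the integral identity
      ∀ f : T → X, Continuous f →
        HasSum (fun i => sesqInt 𝕜 ν (fun t => R i (f (ω i t)))) (sesqInt 𝕜 μ f) := by
  have hvar : ∑' i, totalVar (pushTerm (R i) (ω i) ν) ≠ ⊤ := by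
    refine ne_top_of_le_ne_top ?_ (ENNReal.tsum_le_tsum fun i => totalVar_pushTerm_le _ (hω i) ν)
    rw [ENNReal.tsum_mul_right]
    exact ENNReal.mul_ne_top
      (ENNReal.tsum_coe_ne_top_iff_summable.2 (NNReal.summable_coe.1 hsum)) hν
  refine ⟨seriesMeasure _ hvar, ENNReal.summable_toReal hvar,
    tendsto_totalVar_seriesMeasure_sub_sum_range _ hvar, fun f hf => ?_⟩
  obtain ⟨g, hg⟩ := exists_seq_simpleFunc_tendstoUniformly hf
  simp only [sesqInt_pushTerm _ (hω _) hν hg]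
  exact hasSum_sesqInt_seriesMeasure _ hvar hg (norm_nonneg _)
    (ContinuousMap.norm_coe_le_norm ⟨f, hf⟩)
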